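/- Assume the equation x(k+1) = A(k)x(k) has an exponential dichotomy on ℤ₋ with projection P(k). Fix m ∈ ℤ₋ and let W be any subspace of ℝⁿ with W ⊕ N(P(m)) = ℝⁿ such that N(Φ(0,m)) ⊆ W (here Φ(0,m) = A(−1)···A(m) and N(Φ(0,m)) is its nullspace). Then there exists a projection family Q(k), k ∈ ℤ₋, satisfying the invariance Q(k+1)A(k) = A(k)Q(k), such that N(Q(m)) = N(P(m)), R(Q(m)) = W, and the equation has an exponential dichotomy on ℤ₋ with projection Q(k). -/

import Mathlib

noncomputable section

open scoped BigOperators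

/-- ℝⁿ as a Euclidean space. -/
abbrev Euc (n : ℕ) := EuclideanSpace ℝ (Fin n)

/-- The transition matrix `Φ(k,m) = A(k-1) ⋯ A(m)`, with `Φ(m,m) = 1`
(and `Φ(k,m) = 1` when `k ≤ m`). -/
def Phi {n : ℕ} (A : ℤ → (Euc n →L[ℝ] Euc n)) (k m : ℤ) : Euc n →L[ℝ] Euc n :=
  (((List.range (k - m).toNat).map fun i => A (m + i)).reverse).prod

/-- `J` is an interval of integers. -/
def IsIntInterval (J : Set ℤ) : Prop :=
  ∀ ⦃a b c : ℤ⦄, a ∈ J → b ∈ J → a ≤ c → c ≤ b → c ∈ J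

/-- The equation `x(k+1) = A(k) x(k)` has an exponential dichotomy on `J` with
projection family `P`, constant `K` and exponent `α`. -/
structure ExpDichotomyOn {n : ℕ} (A : ℤ → (Euc n →L[ℝ] Euc n)) (J : Set ℤ)
    (P : ℤ → (Euc n →L[ℝ] Euc n)) (K α : ℝ) : Prop where
  one_le_K : 1 ≤ K
  alpha_pos : 0 < α
  proj : ∀ k ∈ J, P k ∘L P k = P k
  rank_const : ∀ k ∈ J, ∀ m ∈ J,
    Module.finrank ℝ (LinearMap.range (P k : Euc n →ₗ[ℝ] Euc n)) = Module.finrank ℝ (LinearMap.range (P m : Euc n →ₗ[ℝ] Euc n))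
  invariance : ∀ m ∈ J, ∀ k ∈ J, m ≤ k → Phi A k m ∘L P m = P k ∘L Phi A k m
  forward : ∀ m ∈ J, ∀ k ∈ J, m ≤ k →
    ‖Phi A k m ∘L P m‖ ≤ K * Real.exp (-α * ((k : ℝ) - (m : ℝ)))
  bijOn : ∀ k : ℤ, k ∈ J → k + 1 ∈ J →
    Set.BijOn (A k) (LinearMap.ker (P k : Euc n →ₗ[ℝ] Euc n) : Set (Euc n)) (LinearMap.ker (P (k + 1) : Euc n →ₗ[ℝ] Euc n) : Set (Euc n))
  backward : ∃ Ψ : ℤ → ℤ → (Euc n →L[ℝ] Euc n), ∀ m ∈ J, ∀ k ∈ J, m ≤ k →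
    (∀ x ∈ LinearMap.ker (P m : Euc n →ₗ[ℝ] Euc n), Ψ m k (Phi A k m x) = x) ∧
    (∀ x ∈ LinearMap.ker (P k : Euc n →ₗ[ℝ] Euc n), Ψ m k x ∈ LinearMap.ker (P m : Euc n →ₗ[ℝ] Euc n) ∧ Phi A k m (Ψ m k x) = x) ∧
    ‖Ψ m k ∘L (1 - P k)‖ ≤ K * Real.exp (-α * ((k : ℝ) - (m : ℝ)))

/-!
Choose complements `R(k)` of `N(P(k))` with `A(k) R(k) ⊆ R(k+1)` and `R(m) = W`, and let `Q(k)` be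
the projection onto `R(k)` along `N(P(k))`. Below `m` take `R(k) = Φ(m,k)⁻¹ W`. Above `m` extend
`A(k) R(k) + N(Φ(0,k+1))` to a complement of `N(P(k+1))`: keeping `N(Φ(0,k)) ⊆ R(k)` is what makes
that space meet `N(P(k+1))` only in `0`.

Two invariant projection families with the same nullspaces satisfy
`Q(k) - P(k) = Φ(k,0) (I - P(0)) (Q(0) - P(0)) Φ(0,k) P(k)`, where `Φ(k,0)` inverts `Φ(0,k)` on
`N(P(k))`. Hence `‖Q(k) - P(k)‖ ≤ K² ‖Q(0) - P(0)‖`, and writing `Φ(k,l) Q(l)` and `Φ(l,k) (I - Q(k))`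
through the corresponding expressions for `P` transfers the dichotomy from `P` to `Q`.
-/

theorem exists_seq_of_exists_succ {α : Type*} (I : ℕ → α → Prop) (S : ℕ → α → α → Prop)
    {a : α} (h0 : I 0 a) (hstep : ∀ j x, I j x → ∃ y, I (j + 1) y ∧ S j x y) :
    ∃ f : ℕ → α, f 0 = a ∧ ∀ j, I j (f j) ∧ S j (f j) (f (j + 1)) := by
  choose g hgI hgS using hstep
  let f : (j : ℕ) → {x // I j x} :=
    fun j => Nat.rec ⟨a, h0⟩ (fun j x => ⟨g j x.1 x.2, hgI j x.1 x.2⟩) j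
  exact ⟨fun j => (f j).1, rfl, fun j => ⟨(f j).2, hgS j _ (f j).2⟩⟩

local notation "𝒩" f:max => LinearMap.ker (ContinuousLinearMap.toLinearMap f)
local notation "ℛ" f:max => LinearMap.range (ContinuousLinearMap.toLinearMap f)

namespace ContinuousLinearMap

variable {E F : Type*} [NormedAddCommGroup E] [NormedSpace ℝ E]
  [NormedAddCommGroup F] [NormedSpace ℝ F]

theorem comp_eq_self_of_ker_le {P Q : E →L[ℝ] E} (hP : P ∘L P = P) (h : 𝒩 P ≤ 𝒩 Q) :
    Q ∘L P = Q := by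
  ext x
  have hx : x - P x ∈ 𝒩 P := by
    simp [LinearMap.mem_ker, ← comp_apply P P, hP]
  have hQx : Q x = Q (P x) := by simpa [sub_eq_zero] using h hx
  exact hQx.symm

theorem comp_eq_comp_of_map_le {Q : E →L[ℝ] E} {Q' : F →L[ℝ] F} (f : E →L[ℝ] F)
    (hQ : Q ∘L Q = Q) (hQ' : Q' ∘L Q' = Q')
    (hrange : (ℛ Q).map (f : E →ₗ[ℝ] F) ≤ ℛ Q')
    (hker : (𝒩 Q).map (f : E →ₗ[ℝ] F) ≤ 𝒩 Q') :
    Q' ∘L f = f ∘L Q := by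
  ext x
  obtain ⟨y, hy⟩ :=
    hrange (Submodule.mem_map_of_mem (LinearMap.mem_range_self (Q : E →ₗ[ℝ] E) x))
  have hy : Q' y = f (Q x) := hy
  have hfix : Q' (f (Q x)) = f (Q x) := by
    rw [← hy]
    exact DFunLike.congr_fun hQ' y
  have hkill : Q' (f (x - Q x)) = 0 := by
    refine hker (Submodule.mem_map_of_mem ?_)
    simp [LinearMap.mem_ker, ← comp_apply Q Q, hQ]
  calc Q' (f x) = Q' (f (Q x)) + Q' (f (x - Q x)) := by
        rw [← map_add, ← map_add, add_sub_cancel]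
    _ = f (Q x) := by rw [hfix, hkill, add_zero]

theorem exists_idempotent_range_ker [FiniteDimensional ℝ E] {p q : Submodule ℝ E}
    (hpq : IsCompl p q) :
    ∃ Q : E →L[ℝ] E, Q ∘L Q = Q ∧ ℛ Q = p ∧ 𝒩 Q = q := by
  refine ⟨LinearMap.toContinuousLinearMap (p.projection q hpq), ?_, ?_, ?_⟩
  · ext x
    simp
  all_goals simp

end ContinuousLinearMap

section Transition

variable {n : ℕ} (A : ℤ → (Euc n →L[ℝ] Euc n))

theorem phi_self (m : ℤ) : Phi A m m = 1 := by
  simp [Phi]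

theorem phi_succ {k m : ℤ} (h : m ≤ k) : Phi A (k + 1) m = A k ∘L Phi A k m := by
  have hlen : (k + 1 - m).toNat = (k - m).toNat + 1 := by omega
  have hlast : m + ((k - m).toNat : ℤ) = k := by omega
  simp only [Phi, hlen, List.range_succ, bind_pure_comp, List.map_eq_map, List.map_map,
    List.map_append, List.map_cons, List.map_nil, List.reverse_append, List.reverse_cons,
    List.reverse_nil, List.nil_append, List.singleton_append, List.prod_cons, hlast,
    ContinuousLinearMap.mul_def]

theorem phi_eq_comp_of_lt {k m : ℤ} (h : k < m) : Phi A m k = Phi A m (k + 1) ∘L A k := by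
  induction m, h using Int.leInduction with
  | base => ext x; simp [phi_succ A le_rfl, phi_self]
  | succ m hkm ih =>
    rw [phi_succ A (by omega), phi_succ A hkm, ih, ContinuousLinearMap.comp_assoc]

theorem map_comap_phi_le {k m : ℤ} (h : k < m) (W : Submodule ℝ (Euc n)) :
    (W.comap (Phi A m k : Euc n →ₗ[ℝ] Euc n)).map (A k : Euc n →ₗ[ℝ] Euc n) ≤
      W.comap (Phi A m (k + 1) : Euc n →ₗ[ℝ] Euc n) := by
  rintro _ ⟨x, hx, rfl⟩
  simpa [phi_eq_comp_of_lt A h] using hx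

theorem phi_comp_eq_comp_phi_of_succ {Q : ℤ → (Euc n →L[ℝ] Euc n)} {m l : ℤ}
    (hml : m ≤ l)
    (hstep : ∀ k, m ≤ k → k < l → Q (k + 1) ∘L A k = A k ∘L Q k) :
    Phi A l m ∘L Q m = Q l ∘L Phi A l m := by
  induction l, hml using Int.leInduction with
  | base => ext x; simp [phi_self]
  | succ l hml ih =>
    rw [phi_succ A hml, ContinuousLinearMap.comp_assoc,
      ih fun k hmk hkl => hstep k hmk (by omega), ← ContinuousLinearMap.comp_assoc,
      ← hstep l hml (by omega), ContinuousLinearMap.comp_assoc]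

end Transition

namespace ExpDichotomyOn

variable {n : ℕ} {A P : ℤ → (Euc n →L[ℝ] Euc n)} {J : Set ℤ} {K α : ℝ}

theorem proj_apply_proj (h : ExpDichotomyOn A J P K α) {k : ℤ} (hk : k ∈ J) (x : Euc n) :
    P k (P k x) = P k x :=
  DFunLike.congr_fun (h.proj k hk) x

theorem phi_apply_proj (h : ExpDichotomyOn A J P K α) {m k : ℤ} (hm : m ∈ J) (hk : k ∈ J)
    (hmk : m ≤ k) (x : Euc n) : Phi A k m (P m x) = P k (Phi A k m x) :=
  DFunLike.congr_fun (h.invariance m hm k hk hmk) x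

theorem eq_zero_of_phi_apply_eq_zero (h : ExpDichotomyOn A J P K α) {m k : ℤ} (hm : m ∈ J)
    (hk : k ∈ J) (hmk : m ≤ k) {x : Euc n} (hx : x ∈ 𝒩 (P m)) (h0 : Phi A k m x = 0) :
    x = 0 := by
  obtain ⟨Ψ, hΨ⟩ := h.backward
  rw [← (hΨ m hm k hk hmk).1 x hx, h0, map_zero]

theorem exists_phi_apply_eq (h : ExpDichotomyOn A J P K α) {m k : ℤ} (hm : m ∈ J)
    (hk : k ∈ J) (hmk : m ≤ k) {y : Euc n} (hy : y ∈ 𝒩 (P k)) :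
    ∃ x ∈ 𝒩 (P m), Phi A k m x = y := by
  obtain ⟨Ψ, hΨ⟩ := h.backward
  exact ⟨Ψ m k y, (hΨ m hm k hk hmk).2.1 y hy⟩

theorem isCompl_comap_phi (h : ExpDichotomyOn A J P K α) {k m : ℤ} (hk : k ∈ J) (hm : m ∈ J)
    (hkm : k ≤ m) {W : Submodule ℝ (Euc n)} (hW : IsCompl W (𝒩 (P m))) :
    IsCompl (W.comap (Phi A m k : Euc n →ₗ[ℝ] Euc n)) (𝒩 (P k)) := by
  constructor
  · rw [Submodule.disjoint_def]
    intro x hxW hxN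
    have hΦx : Phi A m k x ∈ 𝒩 (P m) := by
      simp only [LinearMap.mem_ker, ContinuousLinearMap.coe_coe] at hxN ⊢
      rw [← h.phi_apply_proj hk hm hkm, hxN, map_zero]
    exact h.eq_zero_of_phi_apply_eq_zero hk hm hkm hxN
      (Submodule.disjoint_def.mp hW.disjoint _ hxW hΦx)
  · rw [codisjoint_iff, eq_top_iff]
    intro x _
    have hΦx : Phi A m k x ∈ W ⊔ 𝒩 (P m) := by
      simp [hW.codisjoint.eq_top]
    obtain ⟨w, hw, _, hv, hwv⟩ := Submodule.mem_sup.mp hΦx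
    obtain ⟨u, hu, rfl⟩ := h.exists_phi_apply_eq hk hm hkm hv
    have hxu : x - u ∈ W.comap (Phi A m k : Euc n →ₗ[ℝ] Euc n) := by
      simp [← hwv, hw]
    exact Submodule.mem_sup.mpr ⟨x - u, hxu, u, hu, sub_add_cancel x u⟩

theorem disjoint_map_sup_ker_phi (h : ExpDichotomyOn A J P K α) {k l : ℤ} (hk : k ∈ J)
    (hk1 : k + 1 ∈ J) (hl : l ∈ J) (hkl : k + 1 ≤ l) {R : Submodule ℝ (Euc n)}
    (hR : Disjoint R (𝒩 (P k))) (hRker : 𝒩 (Phi A l k) ≤ R) :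
    Disjoint (R.map (A k : Euc n →ₗ[ℝ] Euc n) ⊔ 𝒩 (Phi A l (k + 1))) (𝒩 (P (k + 1))) := by
  rw [Submodule.disjoint_def]
  intro v hv hvN
  obtain ⟨_, ⟨y, hy, rfl⟩, z, hz, rfl⟩ := Submodule.mem_sup.mp hv
  simp only [LinearMap.mem_ker, ContinuousLinearMap.coe_coe] at hz hvN ⊢
  have hΦv : Phi A l (k + 1) (A k y + z) = Phi A l k y := by
    simp [hz, phi_eq_comp_of_lt A (show k < l by omega)]
  have hΦPy : Phi A l k (P k y) = 0 := by
    rw [h.phi_apply_proj hk hl (by omega), ← hΦv, ← h.phi_apply_proj hk1 hl hkl, hvN, map_zero]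
  have hy_eq : y - P k y = 0 :=
    Submodule.disjoint_def.mp hR _ (R.sub_mem hy (hRker hΦPy)) (by simp [h.proj_apply_proj hk])
  apply h.eq_zero_of_phi_apply_eq_zero hk1 hl hkl hvN
  rw [hΦv, sub_eq_zero.mp hy_eq, hΦPy]


open ContinuousLinearMap

theorem mul_exp_le (h : ExpDichotomyOn A J P K α) {k m : ℤ} (hkm : k ≤ m) :
    K * Real.exp (-α * ((m : ℝ) - (k : ℝ))) ≤ K := by
  have hkm' : (k : ℝ) ≤ m := by exact_mod_cast hkm
  have hexp : Real.exp (-α * ((m : ℝ) - (k : ℝ))) ≤ 1 :=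
    Real.exp_le_one_iff.mpr (by nlinarith [h.alpha_pos])
  nlinarith [h.one_le_K]

variable {Q : ℤ → (Euc n →L[ℝ] Euc n)}

theorem norm_sub_le_of_ker_eq (h : ExpDichotomyOn A J P K α)
    (hQ : ∀ k ∈ J, Q k ∘L Q k = Q k)
    (hker : ∀ k ∈ J, 𝒩 (Q k) = 𝒩 (P k))
    (hinv : ∀ m ∈ J, ∀ k ∈ J, m ≤ k → Phi A k m ∘L Q m = Q k ∘L Phi A k m)
    {k m : ℤ} (hk : k ∈ J) (hm : m ∈ J) (hkm : k ≤ m) :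
    ‖Q k - P k‖ ≤ K ^ 2 * ‖Q m - P m‖ := by
  obtain ⟨Ψ, hΨ⟩ := h.backward
  obtain ⟨hleft, -, hΨbound⟩ := hΨ k hk m hm hkm
  have hPQk := DFunLike.congr_fun (comp_eq_self_of_ker_le (hQ k hk) (hker k hk).le)
  have hPQm := DFunLike.congr_fun (comp_eq_self_of_ker_le (hQ m hm) (hker m hm).le)
  have hQPm := DFunLike.congr_fun (comp_eq_self_of_ker_le (h.proj m hm) (hker m hm).ge)
  have hQΦ := DFunLike.congr_fun (hinv k hk m hm hkm)
  simp only [comp_apply] at hPQk hPQm hQPm hQΦ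
  -- `Q k - P k` takes values in `N(P k)`, where `Ψ k m` inverts `Φ m k`.
  have hfactor :
      Q k - P k = (Ψ k m ∘L (1 - P m)) ∘L (Q m - P m) ∘L (Phi A m k ∘L P k) := by
    ext x
    have hmem : (Q k - P k) x ∈ 𝒩 (P k) := by
      simp [hPQk, h.proj_apply_proj hk]
    rw [← hleft _ hmem]
    simp [hQΦ, h.phi_apply_proj hk hm hkm, hPQm, hQPm, h.proj_apply_proj hm]
  have hΦP : ‖Phi A m k ∘L P k‖ ≤ K := (h.forward k hk m hm hkm).trans (h.mul_exp_le hkm)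
  have hΨP : ‖Ψ k m ∘L (1 - P m)‖ ≤ K := hΨbound.trans (h.mul_exp_le hkm)
  calc ‖Q k - P k‖
      ≤ ‖Ψ k m ∘L (1 - P m)‖ * (‖Q m - P m‖ * ‖Phi A m k ∘L P k‖) := by
        rw [hfactor]
        exact (opNorm_comp_le _ _).trans (by gcongr; exact opNorm_comp_le _ _)
    _ ≤ K * (‖Q m - P m‖ * K) := by gcongr; linarith [h.one_le_K]
    _ = K ^ 2 * ‖Q m - P m‖ := by ring

theorem of_ker_eq (h : ExpDichotomyOn A J P K α)
    (hQ : ∀ k ∈ J, Q k ∘L Q k = Q k)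
    (hker : ∀ k ∈ J, 𝒩 (Q k) = 𝒩 (P k))
    (hinv : ∀ m ∈ J, ∀ k ∈ J, m ≤ k → Phi A k m ∘L Q m = Q k ∘L Phi A k m)
    {B : ℝ} (hB0 : 0 ≤ B) (hB : ∀ k ∈ J, ‖Q k - P k‖ ≤ B) :
    ExpDichotomyOn A J Q ((1 + B) * K) α where
  one_le_K := by nlinarith [h.one_le_K]
  alpha_pos := h.alpha_pos
  proj := hQ
  rank_const k hk m hm := by
    have hQk := LinearMap.finrank_range_add_finrank_ker (Q k : Euc n →ₗ[ℝ] Euc n)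
    have hQm := LinearMap.finrank_range_add_finrank_ker (Q m : Euc n →ₗ[ℝ] Euc n)
    have hPk := LinearMap.finrank_range_add_finrank_ker (P k : Euc n →ₗ[ℝ] Euc n)
    have hPm := LinearMap.finrank_range_add_finrank_ker (P m : Euc n →ₗ[ℝ] Euc n)
    rw [hker k hk] at hQk
    rw [hker m hm] at hQm
    have := h.rank_const k hk m hm
    omega
  invariance := hinv
  forward m hm k hk hmk := by
    have hQP := DFunLike.congr_fun (comp_eq_self_of_ker_le (h.proj k hk) (hker k hk).ge)
    simp only [comp_apply] at hQP
    have hid : Phi A k m ∘L Q m = (1 + (Q k - P k)) ∘L (Phi A k m ∘L P m) := by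
      ext x
      have hQΦ := DFunLike.congr_fun (hinv m hm k hk hmk) x
      simp only [comp_apply] at hQΦ
      simp [hQΦ, h.phi_apply_proj hm hk hmk, hQP, h.proj_apply_proj hk]
    calc ‖Phi A k m ∘L Q m‖
        ≤ ‖1 + (Q k - P k)‖ * ‖Phi A k m ∘L P m‖ := hid ▸ opNorm_comp_le _ _
      _ ≤ (1 + B) * (K * Real.exp (-α * ((k : ℝ) - (m : ℝ)))) :=
        mul_le_mul ((norm_add_le _ _).trans (add_le_add norm_id_le (hB k hk)))
          (h.forward m hm k hk hmk) (norm_nonneg _) (by linarith)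
      _ = _ := by ring
  bijOn k hk hk1 := by
    rw [hker k hk, hker (k + 1) hk1]
    exact h.bijOn k hk hk1
  backward := by
    obtain ⟨Ψ, hΨ⟩ := h.backward
    refine ⟨Ψ, fun m hm k hk hmk => ?_⟩
    obtain ⟨hleft, hright, hbound⟩ := hΨ m hm k hk hmk
    refine ⟨hker m hm ▸ hleft, hker k hk ▸ hker m hm ▸ hright, ?_⟩
    have hPQ := DFunLike.congr_fun (comp_eq_self_of_ker_le (hQ k hk) (hker k hk).le)
    simp only [comp_apply] at hPQ
    have hid : Ψ m k ∘L (1 - Q k) = (Ψ m k ∘L (1 - P k)) ∘L (1 - (Q k - P k)) := by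
      ext x
      simp [hPQ, h.proj_apply_proj hk]
    calc ‖Ψ m k ∘L (1 - Q k)‖
        ≤ ‖Ψ m k ∘L (1 - P k)‖ * ‖1 - (Q k - P k)‖ := hid ▸ opNorm_comp_le _ _
      _ ≤ (K * Real.exp (-α * ((k : ℝ) - (m : ℝ)))) * (1 + B) :=
        mul_le_mul hbound ((norm_sub_le _ _).trans (add_le_add norm_id_le (hB k hk)))
          (norm_nonneg _) (mul_nonneg (by linarith [h.one_le_K]) (Real.exp_pos _).le)
      _ = _ := by ring

theorem exists_isCompl_forward (h : ExpDichotomyOn A {k : ℤ | k ≤ 0} P K α) {m : ℤ}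
    {W : Submodule ℝ (Euc n)} (hW : IsCompl W (𝒩 (P m))) (hker : 𝒩 (Phi A 0 m) ≤ W) :
    ∃ F : ℕ → Submodule ℝ (Euc n), F 0 = W ∧ ∀ j : ℕ, m + j ≤ 0 →
      IsCompl (F j) (𝒩 (P (m + j))) ∧ (m + j + 1 ≤ 0 → (F j).map (A (m + j) : Euc n →ₗ[ℝ] Euc n) ≤ F (j + 1)) := by
  -- `N(Φ(0, k)) ≤ F j` is carried along: it is what keeps `A(k) (F j)` off `N(P(k + 1))`.
  refine (exists_seq_of_exists_succ
    (fun (j : ℕ) R => m + j ≤ 0 → IsCompl R (𝒩 (P (m + j))) ∧ 𝒩 (Phi A 0 (m + j)) ≤ R)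
    (fun (j : ℕ) R R' => m + j + 1 ≤ 0 → R.map (A (m + j) : Euc n →ₗ[ℝ] Euc n) ≤ R')
    (by simpa using fun _ => ⟨hW, hker⟩) ?_).imp
    fun F ⟨hF0, hF⟩ => ⟨hF0, fun j hj => ⟨((hF j).1 hj).1, (hF j).2⟩⟩
  intro j R hR
  by_cases hj : m + j + 1 ≤ 0
  · obtain ⟨hRc, hRk⟩ := hR (by omega)
    obtain ⟨R', hle, hR'⟩ := (h.disjoint_map_sup_ker_phi (l := 0) (show m + (j : ℤ) ≤ 0 by omega)
      hj (le_refl (0 : ℤ)) hj hRc.disjoint hRk).exists_isCompl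
    refine ⟨R', fun _ => ?_, fun _ => le_sup_left.trans hle⟩
    rw [Nat.cast_succ, ← add_assoc]
    exact ⟨hR', le_sup_right.trans hle⟩
  · exact ⟨⊤, fun hj' => absurd (by push_cast at hj'; omega) hj, fun hj' => absurd hj' hj⟩

theorem exists_invariant_complements (h : ExpDichotomyOn A {k : ℤ | k ≤ 0} P K α) {m : ℤ}
    (hm : m ≤ 0) {W : Submodule ℝ (Euc n)} (hW : IsCompl W (𝒩 (P m)))
    (hker : 𝒩 (Phi A 0 m) ≤ W) :
    ∃ R : ℤ → Submodule ℝ (Euc n), R m = W ∧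
      (∀ k ≤ 0, IsCompl (R k) (𝒩 (P k))) ∧
      ∀ k : ℤ, k + 1 ≤ 0 → (R k).map (A k : Euc n →ₗ[ℝ] Euc n) ≤ R (k + 1) := by
  obtain ⟨F, hF0, hF⟩ := h.exists_isCompl_forward hW hker
  let R : ℤ → Submodule ℝ (Euc n) := fun k =>
    if m ≤ k then F (k - m).toNat else W.comap (Phi A m k : Euc n →ₗ[ℝ] Euc n)
  have hRge : ∀ k, m ≤ k → R k = F (k - m).toNat := fun k hk => if_pos hk
  have hRle : ∀ k ≤ m, R k = W.comap (Phi A m k : Euc n →ₗ[ℝ] Euc n) := by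
    intro k hk
    rcases hk.lt_or_eq with hk | rfl
    · exact if_neg (by omega)
    · ext x
      simp [R, hF0, phi_self]
  have hcast : ∀ k, m ≤ k → m + ((k - m).toNat : ℤ) = k := fun k hk => by omega
  refine ⟨R, by simp [hRge m le_rfl, hF0], fun k hk => ?_, fun k hk => ?_⟩
  · rcases le_total m k with hmk | hkm
    · have hFk := (hF (k - m).toNat (by omega)).1
      rwa [hcast k hmk, ← hRge k hmk] at hFk
    · rw [hRle k hkm]
      exact h.isCompl_comap_phi hk hm hkm hW
  · rcases lt_or_ge k m with hkm | hmk
    · rw [hRle k hkm.le, hRle (k + 1) hkm]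
      exact map_comap_phi_le A hkm W
    · rw [hRge k hmk, hRge (k + 1) (by omega), show (k + 1 - m).toNat = (k - m).toNat + 1 by omega]
      have hFk := (hF (k - m).toNat (by omega)).2
      rw [hcast k hmk] at hFk
      exact hFk hk

theorem exists_invariant_projections (h : ExpDichotomyOn A {k : ℤ | k ≤ 0} P K α) {m : ℤ}
    (hm : m ≤ 0) {W : Submodule ℝ (Euc n)} (hW : IsCompl W (𝒩 (P m)))
    (hker : 𝒩 (Phi A 0 m) ≤ W) :
    ∃ Q : ℤ → (Euc n →L[ℝ] Euc n),
      (∀ k ≤ 0, Q k ∘L Q k = Q k) ∧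
      (∀ k ≤ 0, 𝒩 (Q k) = 𝒩 (P k)) ∧
      (∀ k : ℤ, k + 1 ≤ 0 → Q (k + 1) ∘L A k = A k ∘L Q k) ∧
      ℛ (Q m) = W := by
  obtain ⟨R, hRm, hRcompl, hAR⟩ := h.exists_invariant_complements hm hW hker
  have hproj : ∀ k : ℤ, ∃ Q : Euc n →L[ℝ] Euc n,
      k ≤ 0 → Q ∘L Q = Q ∧ ℛ Q = R k ∧ 𝒩 Q = 𝒩 (P k) := by
    intro k
    by_cases hk : k ≤ 0
    · obtain ⟨Q, hQ⟩ := ContinuousLinearMap.exists_idempotent_range_ker (hRcompl k hk)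
      exact ⟨Q, fun _ => hQ⟩
    · exact ⟨0, fun hk' => absurd hk' hk⟩
  choose Q hQ using hproj
  refine ⟨Q, fun k hk => (hQ k hk).1, fun k hk => (hQ k hk).2.2, fun k hk => ?_,
    (hQ m hm).2.1.trans hRm⟩
  obtain ⟨-, hrange, hkerk⟩ := hQ k (by omega)
  obtain ⟨hQk1, hrange1, hkerk1⟩ := hQ (k + 1) hk
  refine ContinuousLinearMap.comp_eq_comp_of_map_le (A k) (hQ k (by omega)).1 hQk1
    (by rw [hrange, hrange1]; exact hAR k hk) ?_
  rw [hkerk, hkerk1, Submodule.map_le_iff_le_comap]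
  exact fun x hx => (h.bijOn k (show k ≤ 0 by omega) hk).mapsTo hx

end ExpDichotomyOn

/-- given an exponential dichotomy on `ℤ₋` with projection `P`, `m ∈ ℤ₋`
and any complement `W` of `N(P(m))` containing `N(Φ(0,m))`, there is an invariant
projection family `Q` with `N(Q(m)) = N(P(m))`, `R(Q(m)) = W`, with respect to which the
equation has an exponential dichotomy on `ℤ₋`. -/
theorem statement9 {n : ℕ} (A P : ℤ → (Euc n →L[ℝ] Euc n)) (K α : ℝ)
    (hED : ExpDichotomyOn A {k : ℤ | k ≤ 0} P K α)
    (m : ℤ) (hm : m ≤ 0) (W : Submodule ℝ (Euc n))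
    (hW : IsCompl W (LinearMap.ker (P m : Euc n →ₗ[ℝ] Euc n)))
    (hker : LinearMap.ker (Phi A 0 m : Euc n →ₗ[ℝ] Euc n) ≤ W) :
    ∃ Q : ℤ → (Euc n →L[ℝ] Euc n),
      (∀ k : ℤ, k + 1 ≤ 0 → Q (k + 1) ∘L A k = A k ∘L Q k) ∧
      LinearMap.ker (Q m : Euc n →ₗ[ℝ] Euc n) = LinearMap.ker (P m : Euc n →ₗ[ℝ] Euc n) ∧
      LinearMap.range (Q m : Euc n →ₗ[ℝ] Euc n) = W ∧
      ∃ K' α' : ℝ, ExpDichotomyOn A {k : ℤ | k ≤ 0} Q K' α' := by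
  obtain ⟨Q, hQproj, hQker, hstep, hQm⟩ := hED.exists_invariant_projections hm hW hker
  have hinv : ∀ l ≤ 0, ∀ k ≤ 0, l ≤ k → Phi A k l ∘L Q l = Q k ∘L Phi A k l :=
    fun l _ k hk hlk => phi_comp_eq_comp_phi_of_succ A hlk fun j _ hjk => hstep j (by omega)
  have hbound : ∀ k ≤ 0, ‖Q k - P k‖ ≤ K ^ 2 * ‖Q 0 - P 0‖ := fun k hk =>
    hED.norm_sub_le_of_ker_eq hQproj hQker hinv hk (le_refl (0 : ℤ)) hk
  exact ⟨Q, hstep, hQker m hm, hQm, _, _,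
    hED.of_ker_eq hQproj hQker hinv (by positivity) hbound⟩
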